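/- Let 𝔤 be a finite-dimensional Lie algebra with Cartan 3-form ω(X,Y,Z) = ⟨X,[Y,Z]⟩ (Killing form ⟨·,·⟩). If ω is multi-symplectic (i.e. v⌟ω = 0 implies v = 0), then the Killing form of 𝔤 is nondegenerate, hence 𝔤 is semisimple. -/

import Mathlib

/-- Let `𝔤` be a finite-dimensional Lie algebra (over a field of
characteristic zero) with Cartan 3-form `ω(X,Y,Z) = ⟨X,[Y,Z]⟩`, where `⟨·,·⟩` is the
Killing form.  If `ω` is multi-symplectic (i.e. `v⌟ω = 0` implies `v = 0`), then the
Killing form of `𝔤` is nondegenerate, and hence `𝔤` is semisimple. -/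
theorem semisimple_of_cartan_three_form_multisymplectic
    (F : Type*) [Field F] [CharZero F]
    (L : Type*) [LieRing L] [LieAlgebra F L] [Module.Finite F L]
    (h : ∀ v : L, (∀ y z : L, killingForm F L v ⁅y, z⁆ = 0) → v = 0) :
    (killingForm F L).Nondegenerate ∧ LieAlgebra.IsSemisimple F L := by
  have hnd : (killingForm F L).Nondegenerate := by
    refine (LieModule.traceForm_isSymm F L L).isRefl.nondegenerate_iff_separatingLeft.mpr ?_
    intro v hv
    exact h v fun y z => hv ⁅y, z⁆
  have hk : LieAlgebra.IsKilling F L := by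
    constructor
    ext x
    simp only [LieIdeal.mem_killingCompl, LieSubmodule.mem_top, forall_true_left,
      LieSubmodule.mem_bot]
    constructor
    · intro hx
      exact hnd.1 x fun y => (LieModule.traceForm_comm F L L x y) ▸ hx y
    · rintro rfl y
      simp
  exact ⟨hnd, inferInstance⟩
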